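/- arXiv:2601.17051 — 3 statements merged into one kernel-verified Lean document; each statement's English description precedes it below -/
import Mathlib

section
/- Let n ≥ 2, let U ⊆ ℝ^{2n+1} be open, and let η, ξ, Φ, f be smooth on U, where η is a nowhere-vanishing differential 1-form, ξ is a vector field with η(ξ) = 1 at every point, Φ is a differential 2-form with Φ(ξ, ·) = 0 at every point and such that at each point p the restriction of Φ_p to ker η_p is nondegenerate, and f : U → ℝ. If dη = 0 and dΦ = 2f η ∧ Φ on U, then there is a smooth function ρ : U → ℝ with df = ρ η; equivalently, df_p vanishes on ker η_p for every p ∈ U (so df = (df(ξ)) η). -/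
open scoped TensorProduct

/-- Wedge product of real-valued alternating forms (shuffle/determinant convention). -/
noncomputable def wedge {E : Type*} [AddCommGroup E] [Module ℝ E] {k l : ℕ}
    (α : E [⋀^Fin k]→ₗ[ℝ] ℝ) (β : E [⋀^Fin l]→ₗ[ℝ] ℝ) :
    E [⋀^Fin (k + l)]→ₗ[ℝ] ℝ :=
  AlternatingMap.domDomCongr finSumFinEquiv
    ((TensorProduct.lid ℝ ℝ).toLinearMap.compAlternatingMap (α.domCoprod β))

/-- A linear functional regarded as an alternating `1`-form. -/
noncomputable def oneForm {E : Type*} [AddCommGroup E] [Module ℝ E]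
    (α : E →ₗ[ℝ] ℝ) : E [⋀^Fin 1]→ₗ[ℝ] ℝ :=
  AlternatingMap.ofSubsingleton ℝ E ℝ 0 α

/-- A differential `k`-form (a family of alternating `k`-forms) is smooth on `U`
if all of its scalar evaluations on constant tuples of vectors are smooth on `U`. -/
def SmoothFormOn {E : Type*} [NormedAddCommGroup E] [NormedSpace ℝ E] {k : ℕ}
    (U : Set E) (θ : E → (E [⋀^Fin k]→ₗ[ℝ] ℝ)) : Prop :=
  ∀ v : Fin k → E, ContDiffOn ℝ (⊤ : ℕ∞) (fun p => θ p v) U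

/-- The exterior derivative of a differential `k`-form on `U`, evaluated at `p` on the
vectors `v` : `(dθ)_p(v₀,…,v_k) = ∑ i, (-1)^i ∂_{v i} (q ↦ θ_q(v₀,…,v̂ᵢ,…,v_k)) (p)`,
i.e. the alternatization of the Fréchet derivative of `θ`. -/
noncomputable def extDer {E : Type*} [NormedAddCommGroup E] [NormedSpace ℝ E] {k : ℕ}
    (U : Set E) (θ : E → (E [⋀^Fin k]→ₗ[ℝ] ℝ)) (p : E) (v : Fin (k + 1) → E) : ℝ :=
  ∑ i : Fin (k + 1), (-1 : ℝ) ^ (i : ℕ) *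
    fderivWithin ℝ (fun q => θ q (fun j => v (i.succAbove j))) U p (v i)

/-! ### Auxiliary material -/

section WedgeEval

open Equiv

private def ws0 : Perm (Fin 1 ⊕ Fin 2) := 1
private def ws1 : Perm (Fin 1 ⊕ Fin 2) := Equiv.swap (Sum.inl 0) (Sum.inr 0)
private def ws2 : Perm (Fin 1 ⊕ Fin 2) := Equiv.swap (Sum.inl 0) (Sum.inr 1)

private lemma mem_range_of_fix (π : Perm (Fin 1 ⊕ Fin 2)) (h0 : π (Sum.inl 0) = Sum.inl 0) :
    π ∈ (Perm.sumCongrHom (Fin 1) (Fin 2)).range := by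
  have hinj := π.injective
  have hne : ∀ b : Fin 2, π (Sum.inr b) ≠ Sum.inl 0 := by
    intro b hb
    rw [← h0] at hb
    exact Sum.inr_ne_inl (hinj hb)
  have key : ∀ b : Fin 2, ∃ c : Fin 2, π (Sum.inr b) = Sum.inr c := by
    intro b
    rcases hx : π (Sum.inr b) with a | c
    · exact absurd (by rw [hx, Subsingleton.elim a 0]) (hne b)
    · exact ⟨c, rfl⟩
  obtain ⟨c0, hc0⟩ := key 0
  obtain ⟨c1, hc1⟩ := key 1
  have hcc : c0 ≠ c1 := by
    intro h
    have : π (Sum.inr 0) = π (Sum.inr 1) := by rw [hc0, hc1, h]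
    simpa using hinj this
  have hcase : (c0 = 0 ∧ c1 = 1) ∨ (c0 = 1 ∧ c1 = 0) := by
    fin_cases c0 <;> fin_cases c1 <;> simp_all
  rcases hcase with ⟨h1, h2⟩ | ⟨h1, h2⟩
  · refine ⟨(1, 1), ?_⟩
    ext x
    rcases x with a | b
    · rw [Subsingleton.elim a 0]; simpa using h0.symm
    · fin_cases b <;> simp [hc0, hc1, h1, h2]
  · refine ⟨(1, Equiv.swap 0 1), ?_⟩
    ext x
    rcases x with a | b
    · rw [Subsingleton.elim a 0]; simpa [Equiv.swap_apply_of_ne_of_ne] using h0.symm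
    · fin_cases b <;> simp [hc0, hc1, h1, h2]

private lemma univQ : (Finset.univ : Finset (Perm.ModSumCongr (Fin 1) (Fin 2))) =
    {Quotient.mk'' ws0, Quotient.mk'' ws1, Quotient.mk'' ws2} := by
  symm
  apply Finset.eq_univ_of_forall
  intro q
  induction q using Quotient.inductionOn' with
  | h σ =>
    have mkeq : ∀ s : Perm (Fin 1 ⊕ Fin 2), (s⁻¹ * σ) ∈ (Perm.sumCongrHom (Fin 1) (Fin 2)).range →
        (Quotient.mk'' σ : Perm.ModSumCongr (Fin 1) (Fin 2)) = Quotient.mk'' s := by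
      intro s hs
      exact (Quotient.sound' (QuotientGroup.leftRel_apply.mpr hs)).symm
    simp only [Finset.mem_insert, Finset.mem_singleton]
    rcases hx : σ (Sum.inl 0) with a | c
    · left
      refine mkeq ws0 (mem_range_of_fix _ ?_)
      simpa [ws0, Subsingleton.elim a 0] using hx
    · fin_cases c
      · right; left
        refine mkeq ws1 (mem_range_of_fix _ ?_)
        simp [ws1, Perm.mul_apply, hx]
      · right; right
        refine mkeq ws2 (mem_range_of_fix _ ?_)
        simp [ws2, Perm.mul_apply, hx]

private lemma fix_of_mem_range (ρ : Perm (Fin 1 ⊕ Fin 2))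
    (h : ρ ∈ (Perm.sumCongrHom (Fin 1) (Fin 2)).range) : ρ (Sum.inl 0) = Sum.inl 0 := by
  obtain ⟨⟨a, b⟩, rfl⟩ := h
  simp [Subsingleton.elim (a 0) 0]

private lemma ne01 : (Quotient.mk'' ws0 : Perm.ModSumCongr (Fin 1) (Fin 2)) ≠ Quotient.mk'' ws1 := by
  intro h
  have := fix_of_mem_range _ (QuotientGroup.leftRel_apply.mp (Quotient.exact' h))
  simp [ws0, ws1, Perm.mul_apply] at this

private lemma ne02 : (Quotient.mk'' ws0 : Perm.ModSumCongr (Fin 1) (Fin 2)) ≠ Quotient.mk'' ws2 := by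
  intro h
  have := fix_of_mem_range _ (QuotientGroup.leftRel_apply.mp (Quotient.exact' h))
  simp [ws0, ws2, Perm.mul_apply] at this

private lemma ne12 : (Quotient.mk'' ws1 : Perm.ModSumCongr (Fin 1) (Fin 2)) ≠ Quotient.mk'' ws2 := by
  intro h
  have := fix_of_mem_range _ (QuotientGroup.leftRel_apply.mp (Quotient.exact' h))
  simp [ws1, ws2, Perm.mul_apply, Equiv.swap_apply_of_ne_of_ne] at this

set_option synthInstance.maxHeartbeats 1000000 in
private lemma wedge_eval {E : Type*} [AddCommGroup E] [Module ℝ E]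
    (α : E [⋀^Fin 1]→ₗ[ℝ] ℝ) (β : E [⋀^Fin 2]→ₗ[ℝ] ℝ) (v : Fin 3 → E) :
    wedge α β v = α ![v 0] * β ![v 1, v 2] - α ![v 1] * β ![v 0, v 2]
      + α ![v 2] * β ![v 0, v 1] := by
  have h1 : wedge α β v = ∑ σ : Perm.ModSumCongr (Fin 1) (Fin 2),
      (TensorProduct.lid ℝ ℝ) (AlternatingMap.domCoprod.summand α β σ (v ∘ finSumFinEquiv)) := by
    rw [wedge]
    simp only [AlternatingMap.domDomCongr_apply, LinearMap.compAlternatingMap_apply,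
      LinearEquiv.coe_coe]
    have h2 : (α.domCoprod β) (v ∘ finSumFinEquiv)
        = ∑ σ : Perm.ModSumCongr (Fin 1) (Fin 2),
          AlternatingMap.domCoprod.summand α β σ (v ∘ finSumFinEquiv) := by
      rw [← MultilinearMap.sum_apply, ← AlternatingMap.domCoprod_coe]
      rfl
    rw [h2, map_sum]
  rw [h1, univQ, Finset.sum_insert (by
      simp only [Finset.mem_insert, Finset.mem_singleton]
      exact not_or.mpr ⟨ne01, ne02⟩),
    Finset.sum_insert (by simp only [Finset.mem_singleton]; exact ne12),
    Finset.sum_singleton]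
  simp only [AlternatingMap.domCoprod.summand_mk'', MultilinearMap.smul_apply,
    MultilinearMap.domDomCongr_apply, MultilinearMap.domCoprod_apply, ws0, ws1, ws2]
  have a0 : (fun i : Fin 1 => (v ∘ finSumFinEquiv) ((1 : Perm (Fin 1 ⊕ Fin 2)) (Sum.inl i))) = ![v 0] := by
    funext i; fin_cases i <;> (simp [Equiv.swap_apply_of_ne_of_ne]; try rfl)
  have b0 : (fun i : Fin 2 => (v ∘ finSumFinEquiv) ((1 : Perm (Fin 1 ⊕ Fin 2)) (Sum.inr i))) = ![v 1, v 2] := by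
    funext i; fin_cases i <;> (simp [Equiv.swap_apply_of_ne_of_ne]; try rfl)
  have a1 : (fun i : Fin 1 => (v ∘ finSumFinEquiv) ((Equiv.swap (Sum.inl 0) (Sum.inr 0) : Perm (Fin 1 ⊕ Fin 2)) (Sum.inl i))) = ![v 1] := by
    funext i; fin_cases i <;> (simp [Equiv.swap_apply_of_ne_of_ne]; try rfl)
  have b1 : (fun i : Fin 2 => (v ∘ finSumFinEquiv) ((Equiv.swap (Sum.inl 0) (Sum.inr 0) : Perm (Fin 1 ⊕ Fin 2)) (Sum.inr i))) = ![v 0, v 2] := by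
    funext i; fin_cases i <;> (simp [Equiv.swap_apply_of_ne_of_ne]; try rfl)
  have a2 : (fun i : Fin 1 => (v ∘ finSumFinEquiv) ((Equiv.swap (Sum.inl 0) (Sum.inr 1) : Perm (Fin 1 ⊕ Fin 2)) (Sum.inl i))) = ![v 2] := by
    funext i; fin_cases i <;> (simp [Equiv.swap_apply_of_ne_of_ne]; try rfl)
  have b2 : (fun i : Fin 2 => (v ∘ finSumFinEquiv) ((Equiv.swap (Sum.inl 0) (Sum.inr 1) : Perm (Fin 1 ⊕ Fin 2)) (Sum.inr i))) = ![v 1, v 0] := by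
    funext i; fin_cases i <;> (simp [Equiv.swap_apply_of_ne_of_ne]; try rfl)
  rw [a0, b0, a1, b1, a2, b2]
  have hswap : β ![v 1, v 0] = - β ![v 0, v 1] := by
    have h := β.map_swap ![v 0, v 1] (i := 0) (j := 1) (by decide)
    have hc : (![v 0, v 1] ∘ Equiv.swap (0 : Fin 2) 1) = ![v 1, v 0] := by
      funext i; fin_cases i <;> simp [Equiv.swap_apply_of_ne_of_ne]
    rw [hc] at h
    exact h
  have hs1 : Equiv.Perm.sign (Equiv.swap (Sum.inl (0:Fin 1)) (Sum.inr (0:Fin 2))) = -1 :=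
    Equiv.Perm.sign_swap (by simp)
  have hs2 : Equiv.Perm.sign (Equiv.swap (Sum.inl (0:Fin 1)) (Sum.inr (1:Fin 2))) = -1 :=
    Equiv.Perm.sign_swap (by simp)
  simp only [map_one, hs1, hs2, one_smul, Units.smul_def,
    Units.val_neg, Units.val_one, neg_smul, one_smul, TensorProduct.lid_tmul,
    TensorProduct.neg_tmul, map_neg, smul_eq_mul]
  simp only [AlternatingMap.coe_multilinearMap]
  rw [hswap]
  ring

end WedgeEval

section Helpers
variable {E : Type*} [NormedAddCommGroup E] [NormedSpace ℝ E] {U : Set E}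

private lemma smooth_fderivW (hU : IsOpen U) {g : E → ℝ} (hg : ContDiffOn ℝ (⊤ : ℕ∞) g U) (b : E) :
    ContDiffOn ℝ (⊤ : ℕ∞) (fun q => fderivWithin ℝ g U q b) U :=
  (hg.fderivWithin hU.uniqueDiffOn (by exact (by simp))).clm_apply contDiffOn_const

private lemma hasFD {g : E → ℝ} (hg : ContDiffOn ℝ (⊤ : ℕ∞) g U) {p : E} (hp : p ∈ U) :
    HasFDerivWithinAt g (fderivWithin ℝ g U p) U p :=
  ((hg p hp).differentiableWithinAt (by simp)).hasFDerivWithinAt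

private lemma schwarz (hU : IsOpen U) {g : E → ℝ} (hg : ContDiffOn ℝ (⊤ : ℕ∞) g U) {p : E}
    (hp : p ∈ U) (a b : E) :
    fderivWithin ℝ (fun q => fderivWithin ℝ g U q b) U p a
      = fderivWithin ℝ (fun q => fderivWithin ℝ g U q a) U p b := by
  have hgat : ContDiffAt ℝ (⊤ : ℕ∞) g p := (hg p hp).contDiffAt (hU.mem_nhds hp)
  have hev : ∀ c : E, fderivWithin ℝ (fun q => fderivWithin ℝ g U q c) U p
      = fderiv ℝ (fun q => fderiv ℝ g q c) p := by
    intro c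
    rw [fderivWithin_of_isOpen hU hp]
    apply Filter.EventuallyEq.fderiv_eq
    filter_upwards [hU.mem_nhds hp] with q hq
    rw [fderivWithin_of_isOpen hU hq]
  have hdiff : DifferentiableAt ℝ (fderiv ℝ g) p :=
    (hgat.fderiv_right (m := 1) (WithTop.coe_le_coe.mpr le_top)).differentiableAt one_ne_zero
  have h1 : ∀ c d : E, fderiv ℝ (fun q => fderiv ℝ g q c) p d = fderiv ℝ (fderiv ℝ g) p d c := by
    intro c d
    rw [fderiv_clm_apply hdiff (differentiableAt_const c)]
    simp
  rw [hev a, hev b, h1 b a, h1 a b]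
  exact hgat.isSymmSndFDerivAt (by simp; exact WithTop.coe_le_coe.mpr le_top) a b

private lemma fder_comb (hU : IsOpen U) {A B C : E → ℝ} (hA : ContDiffOn ℝ (⊤ : ℕ∞) A U)
    (hB : ContDiffOn ℝ (⊤ : ℕ∞) B U) (hC : ContDiffOn ℝ (⊤ : ℕ∞) C U) {p : E} (hp : p ∈ U) (c : E) :
    fderivWithin ℝ (fun q => A q - B q + C q) U p c
      = fderivWithin ℝ A U p c - fderivWithin ℝ B U p c + fderivWithin ℝ C U p c := by
  have h := (((hasFD hA hp).sub (hasFD hB hp)).add (hasFD hC hp)).fderivWithin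
    (hU.uniqueDiffOn p hp)
  rw [show (fun q => A q - B q + C q) = A - B + C from rfl, h]
  simp

end Helpers

section Alg
variable {E : Type*} [AddCommGroup E] [Module ℝ E]

private def eta_lin (α : E [⋀^Fin 1]→ₗ[ℝ] ℝ) : E →ₗ[ℝ] ℝ where
  toFun X := α ![X]
  map_add' X Y := by
    have h : ∀ Z : E, ![Z] = Function.update ![(0:E)] 0 Z := by
      intro Z; funext i; fin_cases i; simp
    show α ![X + Y] = α ![X] + α ![Y]
    rw [h (X + Y), h X, h Y, AlternatingMap.map_update_add]
  map_smul' c X := by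
    have h : ∀ Z : E, ![Z] = Function.update ![(0:E)] 0 Z := by
      intro Z; funext i; fin_cases i; simp
    show α ![c • X] = (RingHom.id ℝ) c • α ![X]
    rw [h (c • X), h X, AlternatingMap.map_update_smul]
    simp

private def phi_lin (β : E [⋀^Fin 2]→ₗ[ℝ] ℝ) (a : E) : E →ₗ[ℝ] ℝ where
  toFun X := β ![a, X]
  map_add' X Y := by
    have h : ∀ Z : E, ![a, Z] = Function.update ![a, (0:E)] 1 Z := by
      intro Z; funext i; fin_cases i <;> simp
    show β ![a, X + Y] = β ![a, X] + β ![a, Y]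
    rw [h (X + Y), h X, h Y, AlternatingMap.map_update_add]
  map_smul' c X := by
    have h : ∀ Z : E, ![a, Z] = Function.update ![a, (0:E)] 1 Z := by
      intro Z; funext i; fin_cases i <;> simp
    show β ![a, c • X] = (RingHom.id ℝ) c • β ![a, X]
    rw [h (c • X), h X, AlternatingMap.map_update_smul]
    simp

end Alg

section ExtDerEval
variable {E : Type*} [NormedAddCommGroup E] [NormedSpace ℝ E]

private lemma extDer2_eval (U : Set E) (θ : E → (E [⋀^Fin 1]→ₗ[ℝ] ℝ)) (q : E) (x y : E) :
    extDer U θ q ![x, y] = fderivWithin ℝ (fun r => θ r ![y]) U q x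
      - fderivWithin ℝ (fun r => θ r ![x]) U q y := by
  rw [extDer, Fin.sum_univ_two]
  have h0 : (fun j : Fin 1 => ![x, y] ((0 : Fin 2).succAbove j)) = ![y] := by
    funext j; fin_cases j; rfl
  have h1 : (fun j : Fin 1 => ![x, y] ((1 : Fin 2).succAbove j)) = ![x] := by
    funext j; fin_cases j; rfl
  rw [h0, h1]
  norm_num
  ring

private lemma extDer3_eval (U : Set E) (θ : E → (E [⋀^Fin 2]→ₗ[ℝ] ℝ)) (q : E) (x y z : E) :
    extDer U θ q ![x, y, z]
      = fderivWithin ℝ (fun r => θ r ![y, z]) U q x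
        - fderivWithin ℝ (fun r => θ r ![x, z]) U q y
        + fderivWithin ℝ (fun r => θ r ![x, y]) U q z := by
  rw [extDer, Fin.sum_univ_three]
  have h0 : (fun j : Fin 2 => ![x, y, z] ((0 : Fin 3).succAbove j)) = ![y, z] := by
    funext j; fin_cases j <;> rfl
  have h1 : (fun j : Fin 2 => ![x, y, z] ((1 : Fin 3).succAbove j)) = ![x, z] := by
    funext j; fin_cases j <;> rfl
  have h2 : (fun j : Fin 2 => ![x, y, z] ((2 : Fin 3).succAbove j)) = ![x, y] := by
    funext j; fin_cases j <;> rfl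
  rw [h0, h1, h2]
  norm_num
  ring
  rfl

end ExtDerEval
section DerR
variable {E : Type*} [NormedAddCommGroup E] [NormedSpace ℝ E] {U : Set E}

private lemma derR (hU : IsOpen U)
    {η : E → (E [⋀^Fin 1]→ₗ[ℝ] ℝ)} (hηs : SmoothFormOn U η)
    {Φ : E → (E [⋀^Fin 2]→ₗ[ℝ] ℝ)} (hΦs : SmoothFormOn U Φ)
    {f : E → ℝ} (hf : ContDiffOn ℝ (⊤ : ℕ∞) f U) {p : E} (hp : p ∈ U) (x y z c : E) :
    fderivWithin ℝ (fun q => 2 * f q *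
        (η q ![x] * Φ q ![y, z] - η q ![y] * Φ q ![x, z] + η q ![z] * Φ q ![x, y])) U p c
      = 2 * fderivWithin ℝ f U p c *
          (η p ![x] * Φ p ![y, z] - η p ![y] * Φ p ![x, z] + η p ![z] * Φ p ![x, y])
        + 2 * f p *
          (fderivWithin ℝ (fun q => η q ![x]) U p c * Φ p ![y, z]
            + η p ![x] * fderivWithin ℝ (fun q => Φ q ![y, z]) U p c
            - fderivWithin ℝ (fun q => η q ![y]) U p c * Φ p ![x, z]
            - η p ![y] * fderivWithin ℝ (fun q => Φ q ![x, z]) U p c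
            + fderivWithin ℝ (fun q => η q ![z]) U p c * Φ p ![x, y]
            + η p ![z] * fderivWithin ℝ (fun q => Φ q ![x, y]) U p c) := by
  have hNx := hasFD (hηs ![x]) hp
  have hNy := hasFD (hηs ![y]) hp
  have hNz := hasFD (hηs ![z]) hp
  have hPyz := hasFD (hΦs ![y, z]) hp
  have hPxz := hasFD (hΦs ![x, z]) hp
  have hPxy := hasFD (hΦs ![x, y]) hp
  have hcombo := ((hNx.mul hPyz).sub (hNy.mul hPxz)).add (hNz.mul hPxy)
  have houter := ((hasFD hf hp).const_mul (2:ℝ)).mul hcombo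
  rw [show fderivWithin ℝ (fun q => 2 * f q *
      (η q ![x] * Φ q ![y, z] - η q ![y] * Φ q ![x, z] + η q ![z] * Φ q ![x, y])) U p = _ from
    houter.fderivWithin (hU.uniqueDiffOn p hp)]
  simp only [ContinuousLinearMap.add_apply, ContinuousLinearMap.coe_smul',
    ContinuousLinearMap.coe_sub', ContinuousLinearMap.coe_add', Pi.add_apply, Pi.sub_apply,
    Pi.smul_apply, smul_eq_mul, Pi.mul_apply]
  ring

end DerR
section Star
variable {E : Type*} [NormedAddCommGroup E] [NormedSpace ℝ E] {U : Set E}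

private lemma star_identity (hU : IsOpen U)
    {η : E → (E [⋀^Fin 1]→ₗ[ℝ] ℝ)} (hηs : SmoothFormOn U η)
    {Φ : E → (E [⋀^Fin 2]→ₗ[ℝ] ℝ)} (hΦs : SmoothFormOn U Φ)
    {f : E → ℝ} (hf : ContDiffOn ℝ (⊤ : ℕ∞) f U)
    (hdη : ∀ p ∈ U, ∀ v : Fin 2 → E, extDer U η p v = 0)
    (hdΦ : ∀ p ∈ U, ∀ v : Fin 3 → E, extDer U Φ p v = ((2 * f p) • wedge (η p) (Φ p)) v)
    {p : E} (hp : p ∈ U) (e X Y Z : E) (hNe : η p ![e] = 1) (hPe : ∀ a, Φ p ![e, a] = 0)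
    (hX : η p ![X] = 0) (hY : η p ![Y] = 0) (hZ : η p ![Z] = 0) :
    fderivWithin ℝ f U p X * Φ p ![Y, Z] - fderivWithin ℝ f U p Y * Φ p ![X, Z]
      + fderivWithin ℝ f U p Z * Φ p ![X, Y] = 0 := by
  -- abbreviations for smoothness
  have hPsm : ∀ u v : E, ContDiffOn ℝ (⊤ : ℕ∞) (fun q => Φ q ![u, v]) U := fun u v => hΦs ![u, v]
  -- value of extDer on U, rewritten through the wedge formula
  have hval : ∀ (x y z : E), ∀ q ∈ U, extDer U Φ q ![x, y, z]
      = 2 * f q * (η q ![x] * Φ q ![y, z] - η q ![y] * Φ q ![x, z] + η q ![z] * Φ q ![x, y]) := by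
    intro x y z q hq
    rw [hdΦ q hq ![x, y, z], AlternatingMap.smul_apply, wedge_eval]
    simp only [Matrix.cons_val_zero, Matrix.cons_val_one, Matrix.head_cons,
      Matrix.cons_val_two, Matrix.tail_cons, smul_eq_mul]
    try ring
  -- Schwarz symmetry for second derivatives of Φ-coefficients
  have hdd : ∀ (a b u v : E),
      fderivWithin ℝ (fun q => fderivWithin ℝ (fun r => Φ r ![u, v]) U q b) U p a
        = fderivWithin ℝ (fun q => fderivWithin ℝ (fun r => Φ r ![u, v]) U q a) U p b :=
    fun a b u v => schwarz hU (hPsm u v) hp a b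
  -- second-derivative expansion of each term
  have hterm : ∀ (x y z c : E),
      fderivWithin ℝ (fun q => extDer U Φ q ![x, y, z]) U p c
        = fderivWithin ℝ (fun q => fderivWithin ℝ (fun r => Φ r ![y, z]) U q x) U p c
          - fderivWithin ℝ (fun q => fderivWithin ℝ (fun r => Φ r ![x, z]) U q y) U p c
          + fderivWithin ℝ (fun q => fderivWithin ℝ (fun r => Φ r ![x, y]) U q z) U p c := by
    intro x y z c
    have hfun : (fun q => extDer U Φ q ![x, y, z])
        = (fun q => fderivWithin ℝ (fun r => Φ r ![y, z]) U q x
            - fderivWithin ℝ (fun r => Φ r ![x, z]) U q y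
            + fderivWithin ℝ (fun r => Φ r ![x, y]) U q z) := by
      funext q; exact extDer3_eval U Φ q x y z
    rw [hfun]
    exact fder_comb hU (smooth_fderivW hU (hPsm y z) x) (smooth_fderivW hU (hPsm x z) y)
      (smooth_fderivW hU (hPsm x y) z) hp c
  -- d∘d = 0 : the alternating second-derivative sum vanishes
  have hS0 : fderivWithin ℝ (fun q => extDer U Φ q ![X, Y, Z]) U p e
      - fderivWithin ℝ (fun q => extDer U Φ q ![e, Y, Z]) U p X
      + fderivWithin ℝ (fun q => extDer U Φ q ![e, X, Z]) U p Y
      - fderivWithin ℝ (fun q => extDer U Φ q ![e, X, Y]) U p Z = 0 := by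
    rw [hterm X Y Z e, hterm e Y Z X, hterm e X Z Y, hterm e X Y Z]
    linear_combination (hdd e X Y Z) - (hdd e Y X Z) + (hdd e Z X Y)
      + (hdd X Y e Z) - (hdd X Z e Y) + (hdd Y Z e X)
  -- replace each extDer-derivative by the derivative of the wedge expression
  have hA : ∀ (x y z c : E), fderivWithin ℝ (fun q => extDer U Φ q ![x, y, z]) U p c
      = 2 * fderivWithin ℝ f U p c *
          (η p ![x] * Φ p ![y, z] - η p ![y] * Φ p ![x, z] + η p ![z] * Φ p ![x, y])
        + 2 * f p *
          (fderivWithin ℝ (fun q => η q ![x]) U p c * Φ p ![y, z]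
            + η p ![x] * fderivWithin ℝ (fun q => Φ q ![y, z]) U p c
            - fderivWithin ℝ (fun q => η q ![y]) U p c * Φ p ![x, z]
            - η p ![y] * fderivWithin ℝ (fun q => Φ q ![x, z]) U p c
            + fderivWithin ℝ (fun q => η q ![z]) U p c * Φ p ![x, y]
            + η p ![z] * fderivWithin ℝ (fun q => Φ q ![x, y]) U p c) := by
    intro x y z c
    have hcg : fderivWithin ℝ (fun q => extDer U Φ q ![x, y, z]) U p
        = fderivWithin ℝ (fun q => 2 * f q *
            (η q ![x] * Φ q ![y, z] - η q ![y] * Φ q ![x, z] + η q ![z] * Φ q ![x, y])) U p :=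
      fderivWithin_congr (hval x y z) (hval x y z p hp)
    rw [hcg]
    exact derR hU hηs hΦs hf hp x y z c
  rw [hA X Y Z e, hA e Y Z X, hA e X Z Y, hA e X Y Z] at hS0
  -- dη = 0 at p, for the pairs involving e
  have hγ : ∀ a : E, η p ![a] = 0 → fderivWithin ℝ (fun q => η q ![a]) U p e
      = fderivWithin ℝ (fun q => η q ![e]) U p a := by
    intro a _
    have h := hdη p hp ![e, a]
    rw [extDer2_eval] at h
    linarith [h]
  -- dΦ = 2f η∧Φ at p evaluated on (X,Y,Z) : all η-terms vanish
  have hδ : fderivWithin ℝ (fun q => Φ q ![Y, Z]) U p X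
      - fderivWithin ℝ (fun q => Φ q ![X, Z]) U p Y
      + fderivWithin ℝ (fun q => Φ q ![X, Y]) U p Z = 0 := by
    have h := hval X Y Z p hp
    rw [extDer3_eval] at h
    rw [hX, hY, hZ] at h
    rw [h]
    ring
  -- substitute the pointwise values
  simp only [hX, hY, hZ, hNe, hPe, mul_zero, zero_mul, mul_one, one_mul, add_zero, zero_add,
    sub_zero, zero_sub, neg_zero, mul_neg, neg_neg] at hS0
  linear_combination (-1/2 : ℝ) * hS0 + f p * Φ p ![Y, Z] * hγ X hX
    - f p * Φ p ![X, Z] * hγ Y hY + f p * Φ p ![X, Y] * hγ Z hZ - f p * hδ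
end Star

/-- On an open `U ⊆ ℝ^(2n+1)`, `n ≥ 2`, with smooth data: `η` a
nowhere-vanishing 1-form, `ξ` a vector field with `η(ξ) = 1`, `Φ` a 2-form with
`Φ(ξ,·) = 0` nondegenerate on `ker η`, and `f` smooth.  If `dη = 0` and
`dΦ = 2f η ∧ Φ` on `U`, then `df = ρ η` for a smooth function `ρ` on `U`. -/
theorem df_proportional_eta (n : ℕ) (hn : 2 ≤ n)
    (U : Set (Fin (2 * n + 1) → ℝ)) (hU : IsOpen U)
    (η : (Fin (2 * n + 1) → ℝ) → ((Fin (2 * n + 1) → ℝ) [⋀^Fin 1]→ₗ[ℝ] ℝ))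
    (hηs : SmoothFormOn U η) (hη0 : ∀ p ∈ U, η p ≠ 0)
    (ξ : (Fin (2 * n + 1) → ℝ) → (Fin (2 * n + 1) → ℝ))
    (hξs : ContDiffOn ℝ (⊤ : ℕ∞) ξ U) (hηξ : ∀ p ∈ U, η p ![ξ p] = 1)
    (Φ : (Fin (2 * n + 1) → ℝ) → ((Fin (2 * n + 1) → ℝ) [⋀^Fin 2]→ₗ[ℝ] ℝ))
    (hΦs : SmoothFormOn U Φ)
    (hΦξ : ∀ p ∈ U, ∀ X, Φ p ![ξ p, X] = 0)
    (hnd : ∀ p ∈ U, ∀ X, η p ![X] = 0 → X ≠ 0 → ∃ Y, η p ![Y] = 0 ∧ Φ p ![X, Y] ≠ 0)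
    (f : (Fin (2 * n + 1) → ℝ) → ℝ) (hf : ContDiffOn ℝ (⊤ : ℕ∞) f U)
    (hdη : ∀ p ∈ U, ∀ v : Fin 2 → (Fin (2 * n + 1) → ℝ), extDer U η p v = 0)
    (hdΦ : ∀ p ∈ U, ∀ v : Fin 3 → (Fin (2 * n + 1) → ℝ),
      extDer U Φ p v = ((2 * f p) • wedge (η p) (Φ p)) v) :
    ∃ ρ : (Fin (2 * n + 1) → ℝ) → ℝ, ContDiffOn ℝ (⊤ : ℕ∞) ρ U ∧
      ∀ p ∈ U, ∀ X, fderivWithin ℝ f U p X = ρ p * η p ![X] := by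
  classical
  refine ⟨fun q => fderivWithin ℝ f U q (ξ q), ?_, ?_⟩
  · exact (hf.fderivWithin hU.uniqueDiffOn (by exact (by simp))).clm_apply hξs
  intro p hp X
  -- the key claim: df kills the kernel of η at p
  have claim0 : ∀ W, η p ![W] = 0 → fderivWithin ℝ f U p W = 0 := by
    intro W hW
    by_contra hκ
    set κl : (Fin (2 * n + 1) → ℝ) →ₗ[ℝ] ℝ := (fderivWithin ℝ f U p).toLinearMap with hκl
    set T : (Fin (2 * n + 1) → ℝ) →ₗ[ℝ] (Fin 3 → ℝ) :=
      LinearMap.pi ![eta_lin (η p), κl, phi_lin (Φ p) W] with hT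
    have hker : LinearMap.ker T ≠ ⊥ := by
      intro hbot
      have h1 := LinearMap.finrank_range_add_finrank_ker T
      rw [hbot, finrank_bot] at h1
      have h2 : Module.finrank ℝ (LinearMap.range T) ≤ Module.finrank ℝ (Fin 3 → ℝ) :=
        Submodule.finrank_le _
      have h3 : Module.finrank ℝ (Fin 3 → ℝ) = 3 := by simp
      have h4 : Module.finrank ℝ (Fin (2 * n + 1) → ℝ) = 2 * n + 1 := by simp
      omega
    obtain ⟨Yv, hYmem, hY0⟩ := Submodule.exists_mem_ne_zero_of_ne_bot hker
    have hTY : T Yv = 0 := LinearMap.mem_ker.mp hYmem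
    have hL1Y : η p ![Yv] = 0 := by
      have := congrFun hTY 0
      simpa [hT, LinearMap.pi_apply, eta_lin] using this
    have hκY : fderivWithin ℝ f U p Yv = 0 := by
      have := congrFun hTY 1
      simpa [hT, hκl, LinearMap.pi_apply] using this
    have hMY : Φ p ![W, Yv] = 0 := by
      have := congrFun hTY 2
      simpa [hT, LinearMap.pi_apply, phi_lin] using this
    obtain ⟨Zv, hZ0, hφYZ⟩ := hnd p hp Yv hL1Y hY0
    have hstar := star_identity hU hηs hΦs hf hdη hdΦ hp (ξ p) W Yv Zv (hηξ p hp)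
      (fun a => hΦξ p hp a) hW hL1Y hZ0
    rw [hκY, hMY] at hstar
    have hmul : fderivWithin ℝ f U p W * Φ p ![Yv, Zv] = 0 := by linarith [hstar]
    rcases mul_eq_zero.mp hmul with h | h
    · exact hκ h
    · exact hφYZ h
  -- decompose X
  have hker : η p ![X - (η p ![X]) • ξ p] = 0 := by
    have h := (eta_lin (η p)).map_sub X ((η p ![X]) • ξ p)
    have h2 := (eta_lin (η p)).map_smul (η p ![X]) (ξ p)
    simp only [eta_lin, LinearMap.coe_mk, AddHom.coe_mk] at h h2
    rw [h, h2, hηξ p hp]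
    simp
  have h0 := claim0 _ hker
  have hlin : fderivWithin ℝ f U p (X - (η p ![X]) • ξ p)
      = fderivWithin ℝ f U p X - (η p ![X]) * fderivWithin ℝ f U p (ξ p) := by
    rw [map_sub, map_smul]
    simp
  rw [hlin] at h0
  linarith [h0]
end

section
/- Let U ⊆ ℝ^m be open, let η be a smooth differential 1-form and Φ a smooth differential 2-form on U with η ∧ Φ nowhere vanishing, let f : U → ℝ be smooth, and let σ, τ : U → ℝ be smooth functions such that on U one has dη = dσ ∧ η = dτ ∧ η and dΦ = 2f η ∧ Φ + 2 dσ ∧ Φ = 2f η ∧ Φ + 2 dτ ∧ Φ. Then d(σ − τ) = 0 on U, i.e. σ − τ is locally constant. -/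
open scoped TensorProduct

set_option synthInstance.maxHeartbeats 1000000

lemma wedge_oneForm_oneForm {E : Type*} [AddCommGroup E] [Module ℝ E]
    (a b : E →ₗ[ℝ] ℝ) (v : Fin 2 → E) :
    wedge (oneForm a) (oneForm b) v = a (v 0) * b (v 1) - a (v 1) * b (v 0) := by
  have h : (oneForm a (E := E)).domCoprod (oneForm b) =
      MultilinearMap.alternatization
        (MultilinearMap.domCoprod (oneForm a (E := E)) (oneForm b)) := by
    rw [MultilinearMap.domCoprod_alternization_eq]; simp
  rw [wedge, AlternatingMap.domDomCongr_apply]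
  rw [LinearMap.compAlternatingMap_apply, h]
  rw [MultilinearMap.alternatization_apply]
  rw [show (Finset.univ : Finset (Equiv.Perm (Fin 1 ⊕ Fin 1))) =
    {1, Equiv.swap (Sum.inl 0) (Sum.inr 0)} from by decide]
  rw [Finset.sum_insert (by decide), Finset.sum_singleton]
  have hsign : Equiv.Perm.sign (Equiv.swap (Sum.inl 0 : Fin 1 ⊕ Fin 1) (Sum.inr 0)) = -1 := by
    decide
  simp [hsign, oneForm, MultilinearMap.domCoprod_apply, Equiv.swap_apply_left,
    Equiv.swap_apply_right, finSumFinEquiv, sub_eq_add_neg]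

lemma domCoprod_sub_left {E : Type*} [AddCommGroup E] [Module ℝ E] {k l : ℕ}
    (a b : E [⋀^Fin k]→ₗ[ℝ] ℝ) (ω : E [⋀^Fin l]→ₗ[ℝ] ℝ) :
    (a - b).domCoprod ω = a.domCoprod ω - b.domCoprod ω := by
  rw [← AlternatingMap.domCoprod'_apply, ← AlternatingMap.domCoprod'_apply,
    ← AlternatingMap.domCoprod'_apply, TensorProduct.sub_tmul, map_sub]

lemma domCoprod_smul_left {E : Type*} [AddCommGroup E] [Module ℝ E] {k l : ℕ}
    (c : ℝ) (a : E [⋀^Fin k]→ₗ[ℝ] ℝ) (ω : E [⋀^Fin l]→ₗ[ℝ] ℝ) :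
    (c • a).domCoprod ω = c • a.domCoprod ω := by
  rw [← AlternatingMap.domCoprod'_apply, ← AlternatingMap.domCoprod'_apply,
    ← TensorProduct.smul_tmul', map_smul]

lemma wedge_sub_left {E : Type*} [AddCommGroup E] [Module ℝ E] {k l : ℕ}
    (a b : E [⋀^Fin k]→ₗ[ℝ] ℝ) (ω : E [⋀^Fin l]→ₗ[ℝ] ℝ) :
    wedge (a - b) ω = wedge a ω - wedge b ω := by
  ext v
  simp [wedge, domCoprod_sub_left]

lemma wedge_smul_left {E : Type*} [AddCommGroup E] [Module ℝ E] {k l : ℕ}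
    (c : ℝ) (a : E [⋀^Fin k]→ₗ[ℝ] ℝ) (ω : E [⋀^Fin l]→ₗ[ℝ] ℝ) :
    wedge (c • a) ω = c • wedge a ω := by
  ext v
  simp [wedge, domCoprod_smul_left]

lemma oneForm_sub {E : Type*} [AddCommGroup E] [Module ℝ E] (a b : E →ₗ[ℝ] ℝ) :
    oneForm (a - b) = oneForm a - oneForm b := by
  ext v
  simp [oneForm]

lemma oneForm_smul {E : Type*} [AddCommGroup E] [Module ℝ E] (c : ℝ) (a : E →ₗ[ℝ] ℝ) :
    oneForm (c • a) = c • oneForm a := by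
  ext v
  simp [oneForm]

/-- If `η`, `Φ` are smooth on the open `U ⊆ ℝ^m` with `η ∧ Φ` nowhere
vanishing, `f`, `σ`, `τ` are smooth, and on `U` one has `dη = dσ ∧ η = dτ ∧ η` and
`dΦ = 2f η ∧ Φ + 2dσ ∧ Φ = 2f η ∧ Φ + 2dτ ∧ Φ`, then `d(σ − τ) = 0` on `U`. -/
theorem conformal_factor_unique {m : ℕ}
    (U : Set (Fin m → ℝ)) (hU : IsOpen U)
    (η : (Fin m → ℝ) → ((Fin m → ℝ) [⋀^Fin 1]→ₗ[ℝ] ℝ)) (hη : SmoothFormOn U η)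
    (Φ : (Fin m → ℝ) → ((Fin m → ℝ) [⋀^Fin 2]→ₗ[ℝ] ℝ)) (hΦ : SmoothFormOn U Φ)
    (hηΦ : ∀ p ∈ U, wedge (η p) (Φ p) ≠ 0)
    (f : (Fin m → ℝ) → ℝ) (hf : ContDiffOn ℝ (⊤ : ℕ∞) f U)
    (σ : (Fin m → ℝ) → ℝ) (hσ : ContDiffOn ℝ (⊤ : ℕ∞) σ U)
    (τ : (Fin m → ℝ) → ℝ) (hτ : ContDiffOn ℝ (⊤ : ℕ∞) τ U)
    (hdησ : ∀ p ∈ U, ∀ v : Fin 2 → (Fin m → ℝ),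
      extDer U η p v = wedge (oneForm (fderivWithin ℝ σ U p).toLinearMap) (η p) v)
    (hdητ : ∀ p ∈ U, ∀ v : Fin 2 → (Fin m → ℝ),
      extDer U η p v = wedge (oneForm (fderivWithin ℝ τ U p).toLinearMap) (η p) v)
    (hdΦσ : ∀ p ∈ U, ∀ v : Fin 3 → (Fin m → ℝ),
      extDer U Φ p v = ((2 * f p) • wedge (η p) (Φ p) +
        (2 : ℝ) • wedge (oneForm (fderivWithin ℝ σ U p).toLinearMap) (Φ p)) v)
    (hdΦτ : ∀ p ∈ U, ∀ v : Fin 3 → (Fin m → ℝ),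
      extDer U Φ p v = ((2 * f p) • wedge (η p) (Φ p) +
        (2 : ℝ) • wedge (oneForm (fderivWithin ℝ τ U p).toLinearMap) (Φ p)) v) :
    ∀ p ∈ U, fderivWithin ℝ (fun q => σ q - τ q) U p = 0 := by
  intro p hp
  set α : (Fin m → ℝ) →ₗ[ℝ] ℝ := (fderivWithin ℝ σ U p).toLinearMap with hα
  set β : (Fin m → ℝ) →ₗ[ℝ] ℝ := (fderivWithin ℝ τ U p).toLinearMap with hβ
  have h1 : ∀ v : Fin 2 → (Fin m → ℝ), wedge (oneForm α) (η p) v = wedge (oneForm β) (η p) v :=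
    fun v => (hdησ p hp v).symm.trans (hdητ p hp v)
  have h2 : ∀ v : Fin 3 → (Fin m → ℝ), wedge (oneForm α) (Φ p) v = wedge (oneForm β) (Φ p) v := by
    intro v
    have h := (hdΦσ p hp v).symm.trans (hdΦτ p hp v)
    simp only [AlternatingMap.add_apply, AlternatingMap.smul_apply, smul_eq_mul] at h
    linarith
  have key : α = β := by
    by_contra hne
    have hx : ∃ x, (α - β) x ≠ 0 := by
      by_contra h
      push_neg at h
      refine hne (LinearMap.ext fun y => ?_)
      have := h y
      simpa [sub_eq_zero] using this
    obtain ⟨x, hx⟩ := hx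
    set γ : (Fin m → ℝ) →ₗ[ℝ] ℝ := α - β with hγ
    set ηl : (Fin m → ℝ) →ₗ[ℝ] ℝ :=
      (AlternatingMap.ofSubsingleton ℝ (Fin m → ℝ) ℝ 0).symm (η p) with hηl
    have hηeq : oneForm ηl = η p :=
      (AlternatingMap.ofSubsingleton ℝ (Fin m → ℝ) ℝ 0).apply_symm_apply (η p)
    have hwγη : wedge (oneForm γ) (oneForm ηl) = 0 := by
      ext v
      rw [hηeq, hγ, oneForm_sub, wedge_sub_left]
      simp [h1 v]
    have hΦγ : wedge (oneForm γ) (Φ p) = 0 := by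
      ext v
      rw [hγ, oneForm_sub, wedge_sub_left]
      simp [h2 v]
    have hprop : ηl = (ηl x / γ x) • γ := by
      refine LinearMap.ext fun y => ?_
      have h0 : wedge (oneForm γ) (oneForm ηl) ![x, y] = 0 := by rw [hwγη]; simp
      rw [wedge_oneForm_oneForm] at h0
      simp only [Matrix.cons_val_zero, Matrix.cons_val_one, Matrix.head_cons] at h0
      rw [LinearMap.smul_apply, smul_eq_mul, div_mul_eq_mul_div, eq_div_iff hx]
      linear_combination h0
    have : wedge (η p) (Φ p) = 0 := by
      rw [← hηeq, hprop, oneForm_smul, wedge_smul_left, hΦγ, smul_zero]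
    exact hηΦ p hp this
  have hds : DifferentiableWithinAt ℝ σ U p :=
    (hσ.differentiableOn (by simp)) p hp
  have hdt : DifferentiableWithinAt ℝ τ U p :=
    (hτ.differentiableOn (by simp)) p hp
  rw [fderivWithin_fun_sub (hU.uniqueDiffOn p hp) hds hdt]
  have heq : fderivWithin ℝ σ U p = fderivWithin ℝ τ U p := by
    refine ContinuousLinearMap.ext fun y => ?_
    exact LinearMap.congr_fun key y
  rw [heq, sub_self]
end

section
/- On ℝ³ with coordinates (x,y,z), define the differential forms η = e^{x} dz, Φ = −e^{z} dx ∧ dy, ω = dx and the smooth function f(x,y,z) = (1/2) e^{−x}. Then on all of ℝ³: dω = 0, dη = ω ∧ η, dΦ = 2f η ∧ Φ + 2ω ∧ Φ, df = −f ω, and η ∧ Φ is nowhere vanishing. Moreover the covectors ω_p and η_p are linearly independent at every point p. In particular, ℝ³ carries a locally conformal almost generalized f-cosymplectic structure (a closed Lee form ω with dη = ω ∧ η and dΦ = 2f η ∧ Φ + 2ω ∧ Φ) whose Lee form ω is not proportional to η at any point. -/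
open scoped TensorProduct

/-- The 1-form `η = e^x dz` on `ℝ³` (coordinates `x = p 0`, `y = p 1`, `z = p 2`). -/
noncomputable def eta3 : (Fin 3 → ℝ) → ((Fin 3 → ℝ) [⋀^Fin 1]→ₗ[ℝ] ℝ) :=
  fun p => Real.exp (p 0) • oneForm (LinearMap.proj 2)

/-- The 2-form `Φ = -e^z dx ∧ dy` on `ℝ³`. -/
noncomputable def Phi3 : (Fin 3 → ℝ) → ((Fin 3 → ℝ) [⋀^Fin 2]→ₗ[ℝ] ℝ) :=
  fun p => (-Real.exp (p 2)) • wedge (oneForm (LinearMap.proj 0)) (oneForm (LinearMap.proj 1))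

/-- The Lee form `ω = dx` on `ℝ³`. -/
noncomputable def omega3 : (Fin 3 → ℝ) → ((Fin 3 → ℝ) [⋀^Fin 1]→ₗ[ℝ] ℝ) :=
  fun _ => oneForm (LinearMap.proj 0)

/-- The function `f(x,y,z) = (1/2) e^{-x}` on `ℝ³`. -/
noncomputable def f3 : (Fin 3 → ℝ) → ℝ := fun p => (1 / 2) * Real.exp (-p 0)

theorem wedge11 {E : Type*} [AddCommGroup E] [Module ℝ E] (A B : E [⋀^Fin 1]→ₗ[ℝ] ℝ) (v : Fin 2 → E) :
    wedge A B v = A (fun _ => v 0) * B (fun _ => v 1) - A (fun _ => v 1) * B (fun _ => v 0) := by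
  have h := MultilinearMap.domCoprod_alternization_eq (R' := ℝ) (Mᵢ := E) (N₁ := ℝ) (N₂ := ℝ) A B
  have h2 := congrArg (fun (m : E [⋀^Fin 1 ⊕ Fin 1]→ₗ[ℝ] (ℝ ⊗[ℝ] ℝ)) =>
      (TensorProduct.lid ℝ ℝ).toLinearMap (m (v ∘ finSumFinEquiv))) h
  simp only [MultilinearMap.alternatization_apply, AlternatingMap.smul_apply, map_sum,
    Fintype.card_fin, Nat.factorial_one, one_mul, one_smul,
    MultilinearMap.domDomCongr_apply, MultilinearMap.domCoprod_apply, map_zsmul, map_nsmul,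
    LinearEquiv.coe_coe, TensorProduct.lid_tmul, smul_eq_mul] at h2
  have huniv : (Finset.univ : Finset (Equiv.Perm (Fin 1 ⊕ Fin 1)))
      = {1, (Equiv.sumComm (Fin 1) (Fin 1) : Equiv.Perm (Fin 1 ⊕ Fin 1))} := by decide
  rw [huniv, Finset.sum_insert (by decide), Finset.sum_singleton] at h2
  have e1 : ∀ i : Fin 1, finSumFinEquiv (Sum.inl i) = (0 : Fin (1+1)) := by decide
  have e2 : ∀ i : Fin 1, finSumFinEquiv (Sum.inr i) = (1 : Fin (1+1)) := by decide
  have s1 : Equiv.Perm.sign (1 : Equiv.Perm (Fin 1 ⊕ Fin 1)) = 1 := by decide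
  have s2 : Equiv.Perm.sign ((Equiv.sumComm (Fin 1) (Fin 1)) : Equiv.Perm (Fin 1 ⊕ Fin 1)) = -1 := by decide
  simp only [Function.comp, Equiv.Perm.one_apply, Equiv.sumComm_apply, Sum.swap_inl,
    Sum.swap_inr, e1, e2, s1, s2, Units.val_neg, Units.val_one, one_zsmul, neg_smul, one_smul,
    ← TensorProduct.neg_tmul, LinearEquiv.coe_coe, TensorProduct.lid_tmul, smul_eq_mul,
    neg_mul] at h2
  have h3 : (wedge A B) v = (TensorProduct.lid ℝ ℝ) ((A.domCoprod B) (v ∘ finSumFinEquiv)) := rfl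
  rw [h3, ← h2]
  simp only [Units.smul_def, Units.val_neg, Units.val_one, neg_zsmul, one_zsmul,
    ← TensorProduct.neg_tmul, LinearEquiv.coe_coe, TensorProduct.lid_tmul, smul_eq_mul, neg_mul]
  rfl

theorem wedge12 {E : Type*} [AddCommGroup E] [Module ℝ E]
    (A : E [⋀^Fin 1]→ₗ[ℝ] ℝ) (B : E [⋀^Fin 2]→ₗ[ℝ] ℝ) (v : Fin 3 → E) :
    wedge A B v = A (fun _ => v 0) * B ![v 1, v 2] - A (fun _ => v 1) * B ![v 0, v 2]
      + A (fun _ => v 2) * B ![v 0, v 1] := by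
  have h := MultilinearMap.domCoprod_alternization_eq (R' := ℝ) (Mᵢ := E) (N₁ := ℝ) (N₂ := ℝ) A B
  have h2 := congrArg (fun (m : E [⋀^Fin 1 ⊕ Fin 2]→ₗ[ℝ] (ℝ ⊗[ℝ] ℝ)) =>
      (TensorProduct.lid ℝ ℝ).toLinearMap (m (v ∘ finSumFinEquiv))) h
  simp only [MultilinearMap.alternatization_apply, AlternatingMap.smul_apply, map_sum,
    Fintype.card_fin, Nat.factorial_one, Nat.factorial_two, one_mul,
    MultilinearMap.domDomCongr_apply, MultilinearMap.domCoprod_apply,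
    LinearEquiv.coe_coe, smul_eq_mul] at h2
  have term : ∀ (x : Equiv.Perm (Fin 1 ⊕ Fin 2)) (a b c : Fin 3),
      finSumFinEquiv (x (Sum.inl 0)) = a → finSumFinEquiv (x (Sum.inr 0)) = b →
      finSumFinEquiv (x (Sum.inr 1)) = c →
      (TensorProduct.lid ℝ ℝ) (Equiv.Perm.sign x •
        ((A : MultilinearMap ℝ (fun _ : Fin 1 => E) ℝ) fun i => (v ∘ finSumFinEquiv) (x (Sum.inl i))) ⊗ₜ[ℝ]
        ((B : MultilinearMap ℝ (fun _ : Fin 2 => E) ℝ) fun i => (v ∘ finSumFinEquiv) (x (Sum.inr i))))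
      = ((Equiv.Perm.sign x : ℤ) : ℝ) * (A (fun _ => v a) * B ![v b, v c]) := by
    intro x a b c ha hb hc
    have e1 : (fun i : Fin 1 => (v ∘ finSumFinEquiv) (x (Sum.inl i))) = fun _ : Fin 1 => v a := by
      funext i
      have : i = 0 := Subsingleton.elim _ _
      subst this; simp [Function.comp, ha]
    have e2 : (fun i : Fin 2 => (v ∘ finSumFinEquiv) (x (Sum.inr i))) = ![v b, v c] := by
      funext i; fin_cases i <;> simp [Function.comp, hb, hc]
    rw [e1, e2]
    rcases Int.units_eq_one_or (Equiv.Perm.sign x) with hs | hs <;> rw [hs] <;>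
      simp only [Units.smul_def, Units.val_neg, Units.val_one, neg_zsmul, one_zsmul,
        ← TensorProduct.neg_tmul, LinearEquiv.coe_coe, LinearEquiv.coe_toLinearMap,
        TensorProduct.lid_tmul, smul_eq_mul, Int.cast_neg, Int.cast_one, neg_mul, one_mul] <;> rfl
  have bswap : ∀ a b : E, B ![b, a] = -B ![a, b] := by
    intro a b
    have hf : (![a, b] ∘ Equiv.swap (0 : Fin 2) 1) = ![b, a] := by
      funext i; fin_cases i <;> rfl
    rw [← hf, B.map_swap _ (by decide : (0 : Fin 2) ≠ 1)]
  set p : Equiv.Perm (Fin 3) → Equiv.Perm (Fin 1 ⊕ Fin 2) :=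
    fun τ => (Equiv.permCongr finSumFinEquiv).symm τ with hp
  have huniv : (Finset.univ : Finset (Equiv.Perm (Fin 1 ⊕ Fin 2)))
      = {p 1, p (Equiv.swap 0 1), p (Equiv.swap 0 2), p (Equiv.swap 1 2),
         p (Equiv.swap 0 1 * Equiv.swap 0 2), p (Equiv.swap 0 2 * Equiv.swap 0 1)} := by
    rw [hp]; decide
  rw [huniv, Finset.sum_insert (by rw [hp]; decide), Finset.sum_insert (by rw [hp]; decide),
    Finset.sum_insert (by rw [hp]; decide), Finset.sum_insert (by rw [hp]; decide),
    Finset.sum_insert (by rw [hp]; decide), Finset.sum_singleton] at h2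
  rw [term (p 1) 0 1 2 (by rw [hp]; decide) (by rw [hp]; decide) (by rw [hp]; decide),
    term (p (Equiv.swap 0 1)) 1 0 2 (by rw [hp]; decide) (by rw [hp]; decide) (by rw [hp]; decide),
    term (p (Equiv.swap 0 2)) 2 1 0 (by rw [hp]; decide) (by rw [hp]; decide) (by rw [hp]; decide),
    term (p (Equiv.swap 1 2)) 0 2 1 (by rw [hp]; decide) (by rw [hp]; decide) (by rw [hp]; decide),
    term (p (Equiv.swap 0 1 * Equiv.swap 0 2)) 2 0 1 (by rw [hp]; decide) (by rw [hp]; decide) (by rw [hp]; decide),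
    term (p (Equiv.swap 0 2 * Equiv.swap 0 1)) 1 2 0 (by rw [hp]; decide) (by rw [hp]; decide) (by rw [hp]; decide)] at h2
  have sgn : ∀ τ : Equiv.Perm (Fin 3), Equiv.Perm.sign (p τ) = Equiv.Perm.sign τ := by
    intro τ; rw [hp]
    simp [Equiv.permCongr_symm, Equiv.Perm.sign_permCongr]
  have s1 : ((Equiv.Perm.sign (p 1) : ℤ) : ℝ) = 1 := by rw [sgn]; norm_num
  have s2 : ((Equiv.Perm.sign (p (Equiv.swap 0 1)) : ℤ) : ℝ) = -1 := by
    rw [sgn, Equiv.Perm.sign_swap (by decide)]; norm_num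
  have s3 : ((Equiv.Perm.sign (p (Equiv.swap 0 2)) : ℤ) : ℝ) = -1 := by
    rw [sgn, Equiv.Perm.sign_swap (by decide)]; norm_num
  have s4 : ((Equiv.Perm.sign (p (Equiv.swap 1 2)) : ℤ) : ℝ) = -1 := by
    rw [sgn, Equiv.Perm.sign_swap (by decide)]; norm_num
  have s5 : ((Equiv.Perm.sign (p (Equiv.swap 0 1 * Equiv.swap 0 2)) : ℤ) : ℝ) = 1 := by
    rw [sgn, Equiv.Perm.sign_mul, Equiv.Perm.sign_swap (by decide),
      Equiv.Perm.sign_swap (by decide)]; norm_num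
  have s6 : ((Equiv.Perm.sign (p (Equiv.swap 0 2 * Equiv.swap 0 1)) : ℤ) : ℝ) = 1 := by
    rw [sgn, Equiv.Perm.sign_mul, Equiv.Perm.sign_swap (by decide),
      Equiv.Perm.sign_swap (by decide)]; norm_num
  rw [s1, s2, s3, s4, s5, s6, bswap (v 0) (v 1), bswap (v 0) (v 2), bswap (v 1) (v 2)] at h2
  have h3 : (wedge A B) v
      = (TensorProduct.lid ℝ ℝ) ((A.domCoprod B) (v ∘ finSumFinEquiv)) := rfl
  have h4 : (TensorProduct.lid ℝ ℝ) ((2 : ℕ) • (A.domCoprod B) (v ∘ finSumFinEquiv))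
      = 2 * (TensorProduct.lid ℝ ℝ) ((A.domCoprod B) (v ∘ finSumFinEquiv)) := by
    have hco : ∀ t : ℝ ⊗[ℝ] ℝ,
        (TensorProduct.lid ℝ ℝ) t = (TensorProduct.lid ℝ ℝ).toLinearMap t := fun _ => rfl
    rw [hco, ← Nat.cast_smul_eq_nsmul ℝ, LinearMap.map_smul, smul_eq_mul, ← hco, Nat.cast_ofNat]
  rw [h4] at h2
  rw [h3]; linarith [h2]

-- evaluation helpers
lemma oneForm_apply {E : Type*} [AddCommGroup E] [Module ℝ E] (α : E →ₗ[ℝ] ℝ)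
    (w : Fin 1 → E) : oneForm α w = α (w 0) := rfl

lemma Wapply (w : Fin 2 → Fin 3 → ℝ) :
    wedge (oneForm (LinearMap.proj 0)) (oneForm (LinearMap.proj 1)) w
      = w 0 0 * w 1 1 - w 1 0 * w 0 1 := by
  rw [wedge11]; rfl

lemma Phi3_apply (p : Fin 3 → ℝ) (w : Fin 2 → Fin 3 → ℝ) :
    Phi3 p w = -Real.exp (p 2) * (w 0 0 * w 1 1 - w 1 0 * w 0 1) := by
  show (-Real.exp (p 2)) * (wedge (oneForm (LinearMap.proj 0)) (oneForm (LinearMap.proj 1)) w) = _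
  rw [Wapply]

lemma eta3_apply (p : Fin 3 → ℝ) (w : Fin 1 → Fin 3 → ℝ) :
    eta3 p w = Real.exp (p 0) * w 0 2 := rfl

lemma omega3_apply (p : Fin 3 → ℝ) (w : Fin 1 → Fin 3 → ℝ) :
    omega3 p w = w 0 0 := rfl

lemma hasFDerivAt_exp_mul (i : Fin 3) (c : ℝ) (p : Fin 3 → ℝ) :
    HasFDerivAt (fun q : Fin 3 → ℝ => Real.exp (q i) * c)
      (c • (Real.exp (p i) • (ContinuousLinearMap.proj i : (Fin 3 → ℝ) →L[ℝ] ℝ))) p := by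
  exact ((ContinuousLinearMap.proj (R := ℝ) (φ := fun _ : Fin 3 => ℝ) i).hasFDerivAt
    (x := p)).exp.mul_const c

lemma fderiv_exp_mul (i : Fin 3) (c : ℝ) (p w : Fin 3 → ℝ) :
    fderivWithin ℝ (fun q : Fin 3 → ℝ => Real.exp (q i) * c) Set.univ p w
      = Real.exp (p i) * w i * c := by
  rw [fderivWithin_univ, (hasFDerivAt_exp_mul i c p).fderiv]
  simp [smul_eq_mul]
  ring

/-- With `η = e^x dz`, `Φ = -e^z dx ∧ dy`, `ω = dx` and
`f = (1/2)e^{-x}` on `ℝ³`, one has `dω = 0`, `dη = ω ∧ η`,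
`dΦ = 2f η ∧ Φ + 2ω ∧ Φ`, `df = -f ω`, `η ∧ Φ` is nowhere vanishing, and `ω` and `η`
are linearly independent at every point: a locally conformal almost generalized
`f`-cosymplectic structure whose Lee form is nowhere proportional to `η`. -/
theorem example_dim3_transverse_Lee_form :
    (∀ p, ∀ v : Fin 2 → (Fin 3 → ℝ), extDer Set.univ omega3 p v = 0) ∧
    (∀ p, ∀ v : Fin 2 → (Fin 3 → ℝ),
      extDer Set.univ eta3 p v = wedge (omega3 p) (eta3 p) v) ∧
    (∀ p, ∀ v : Fin 3 → (Fin 3 → ℝ),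
      extDer Set.univ Phi3 p v =
        ((2 * f3 p) • wedge (eta3 p) (Phi3 p) + (2 : ℝ) • wedge (omega3 p) (Phi3 p)) v) ∧
    (∀ p, oneForm (fderiv ℝ f3 p).toLinearMap = (-f3 p) • omega3 p) ∧
    (∀ p, wedge (eta3 p) (Phi3 p) ≠ 0) ∧
    (∀ p, ∀ a b : ℝ, a • omega3 p + b • eta3 p = 0 → a = 0 ∧ b = 0) := by
  have hexp : ∀ x : ℝ, Real.exp (-x) * Real.exp x = 1 := by
    intro x; rw [← Real.exp_add]; simp
  refine ⟨?_, ?_, ?_, ?_, ?_, ?_⟩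
  · -- dω = 0
    intro p v
    have hconst : ∀ w : Fin 1 → Fin 3 → ℝ,
        (fun q : Fin 3 → ℝ => omega3 q w) = fun _ => w 0 0 := fun _ => rfl
    simp [extDer, hconst, fderivWithin_univ]
  · -- dη = ω ∧ η
    intro p v
    have heta : ∀ w : Fin 1 → Fin 3 → ℝ,
        (fun q : Fin 3 → ℝ => eta3 q w) = fun q => Real.exp (q 0) * w 0 2 := fun _ => rfl
    have i1 : (0 : Fin 2).succAbove 0 = 1 := by decide
    have i2 : (1 : Fin 2).succAbove 0 = 0 := by decide
    simp only [extDer, heta, Fin.sum_univ_succ, Fin.sum_univ_zero, Fin.succ_zero_eq_one,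
      fderiv_exp_mul, i1, i2, Fin.val_zero, Fin.val_one, pow_zero, pow_one, add_zero]
    rw [wedge11, omega3_apply, omega3_apply, eta3_apply, eta3_apply]
    ring
  · -- dΦ
    intro p v
    have hphi : ∀ w : Fin 2 → Fin 3 → ℝ,
        (fun q : Fin 3 → ℝ => Phi3 q w)
          = fun q => Real.exp (q 2) * (-(w 0 0 * w 1 1 - w 1 0 * w 0 1)) := by
      intro w; funext q; rw [Phi3_apply]; ring
    have i1 : (0 : Fin 3).succAbove 0 = 1 := by decide
    have i2 : (0 : Fin 3).succAbove 1 = 2 := by decide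
    have i3 : (1 : Fin 3).succAbove 0 = 0 := by decide
    have i4 : (1 : Fin 3).succAbove 1 = 2 := by decide
    have i5 : (2 : Fin 3).succAbove 0 = 0 := by decide
    have i6 : (2 : Fin 3).succAbove 1 = 1 := by decide
    simp only [extDer, hphi, Fin.sum_univ_succ, Fin.sum_univ_zero, Fin.succ_zero_eq_one, Fin.succ_one_eq_two,
      fderiv_exp_mul, i1, i2, i3, i4, i5, i6, add_zero, AlternatingMap.add_apply,
      AlternatingMap.smul_apply, smul_eq_mul]
    rw [wedge12, wedge12]
    simp only [Matrix.cons_val_zero, Matrix.cons_val_one, Matrix.head_cons, eta3_apply,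
      omega3_apply, Phi3_apply, f3, Real.exp_neg, Fin.succ_zero_eq_one, Fin.val_zero,
      Fin.val_one, Fin.val_succ, Fin.val_two, pow_zero, pow_one, pow_succ]
    field_simp
    ring
  · -- df = -f ω
    intro p
    have h0 : HasFDerivAt (fun q : Fin 3 → ℝ => q 0)
        (ContinuousLinearMap.proj 0 : (Fin 3 → ℝ) →L[ℝ] ℝ) p :=
      (ContinuousLinearMap.proj (R := ℝ) (φ := fun _ : Fin 3 => ℝ) 0).hasFDerivAt
    have h1 := (h0.neg).exp.const_mul (1 / 2 : ℝ)
    have h2 : HasFDerivAt f3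
        ((-f3 p) • (ContinuousLinearMap.proj 0 : (Fin 3 → ℝ) →L[ℝ] ℝ)) p := by
      refine h1.congr_fderiv ?_
      ext w
      simp [f3, smul_eq_mul]
      ring
    ext w
    rw [h2.fderiv]
    show (-f3 p) * w 0 0 = _
    rfl
  · -- η ∧ Φ nowhere zero
    intro p h
    have h0 := AlternatingMap.congr_fun h
      ![(fun j => if j = 0 then (1 : ℝ) else 0), (fun j => if j = 1 then (1 : ℝ) else 0),
        (fun j => if j = 2 then (1 : ℝ) else 0)]
    rw [wedge12] at h0
    simp only [Matrix.cons_val_zero, Matrix.cons_val_one, Matrix.head_cons, eta3_apply,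
      Phi3_apply, AlternatingMap.zero_apply] at h0
    simp at h0
  · -- linear independence
    intro p a b h
    have h0 := AlternatingMap.congr_fun h (fun _ j => if j = 0 then (1 : ℝ) else 0)
    have h2 := AlternatingMap.congr_fun h (fun _ j => if j = 2 then (1 : ℝ) else 0)
    simp only [AlternatingMap.add_apply, AlternatingMap.smul_apply, smul_eq_mul,
      omega3_apply, eta3_apply, AlternatingMap.zero_apply] at h0 h2
    simp at h0 h2
    exact ⟨h0, h2⟩
end
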